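/- Fix α > 0 and a real sequence {γ_n}. Define the polynomials Q_k(x) = ∑_{j=0}^{⌊k/2⌋} ((-α)^j / (j!(k-2j)!)) g*_{k-j}(-1) H^{(α)}_{k-2j}(x), where g*_n(-1) = ∑_{k=0}^{n} C(n,k) γ_k (-1)^{n-k}. Then for every n ≥ 0, ∑_{k=0}^{n} Q_k(x) · (d/dx)^k H^{(α)}_n(x) = γ_n H^{(α)}_n(x). -/

import Mathlib

/-!
`H_n = exp (-α D² / 2) Xⁿ`, whence `D H_n = n H_{n-1}` and `H_{n+1} = (X - α D) H_n`. On a product,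
`X - α D` acts as `(X - α D) ⊗ 1 - α (1 ⊗ D)`, a sum of two commuting operators, so the binomial
theorem gives `H_{p+q} = ∑ᵢ C(p,i) (-α)ⁱ q^(i) H_{p-i} H_{q-i}` (falling factorial `q^(i)`).
Inserting `Dᵏ H_n = n^(k) H_{n-k}` into `∑ₖ Q_k Dᵏ H_n` and grouping the terms by `m = k - j`, the
inner sums become `C(n,m) g*_m(-1) H_n`; finally `g*_m(-1) = Δᵐγ(0)`, so
`∑ₘ C(n,m) g*_m(-1) = γ_n` is Newton's forward-difference formula.
-/

open Polynomial Finset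

noncomputable def genHermite (α : ℝ) (n : ℕ) : Polynomial ℝ :=
  ∑ j ∈ Finset.range (n / 2 + 1),
    C ((n.factorial : ℝ) * (-α) ^ j / (2 ^ j * j.factorial * (n - 2 * j).factorial)) *
      X ^ (n - 2 * j)

noncomputable def gstar (γ : ℕ → ℝ) (n : ℕ) : ℝ :=
  ∑ k ∈ Finset.range (n + 1), (n.choose k : ℝ) * γ k * (-1) ^ (n - k)

noncomputable def Qpoly (α : ℝ) (γ : ℕ → ℝ) (k : ℕ) : Polynomial ℝ :=
  ∑ j ∈ Finset.range (k / 2 + 1),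
    C ((-α) ^ j / (j.factorial * (k - 2 * j).factorial) * gstar γ (k - j)) *
      genHermite α (k - 2 * j)

theorem Polynomial.iterate_derivative_succ_X_mul {R : Type*} [Semiring R] (m : ℕ) (p : R[X]) :
    derivative^[m + 1] (X * p) = X * derivative^[m + 1] p + (m + 1) • derivative^[m] p := by
  induction m with
  | zero => simp [derivative_mul, add_comm]
  | succ m ih =>
    rw [Function.iterate_succ_apply' _ (m + 1), ih, derivative_add, derivative_mul, derivative_X,
      one_mul, derivative_smul, ← Function.iterate_succ_apply' derivative (m + 1),
      ← Function.iterate_succ_apply' derivative m, succ_nsmul _ (m + 1)]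
    abel

theorem Nat.descFactorial_add_eq_mul_choose {m i : ℕ} (n : ℕ) (h : i ≤ m) :
    (m + n).descFactorial (m + i) =
      (m + n).choose m * m.choose i * n.descFactorial i * (i.factorial * (m - i).factorial) := by
  rw [← Nat.descFactorial_mul_descFactorial (Nat.le_add_right m i), Nat.add_sub_cancel_left,
    Nat.add_sub_cancel_left, Nat.descFactorial_eq_factorial_mul_choose (m + n) m,
    ← Nat.choose_mul_factorial_mul_factorial h]
  ring

section GenHermite

variable (α : ℝ)

noncomputable def gaussCoeff (j : ℕ) : ℝ := (-α) ^ j / (2 ^ j * j.factorial)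

theorem gaussCoeff_zero : gaussCoeff α 0 = 1 := by
  simp [gaussCoeff]

theorem gaussCoeff_succ_mul (j : ℕ) :
    gaussCoeff α (j + 1) * (2 * j + 2) = -α * gaussCoeff α j := by
  simp only [gaussCoeff, Nat.factorial_succ]
  push_cast
  field_simp
  ring

/-- A truncation of `exp (-α D² / 2)`. -/
noncomputable def hermiteTransform (N : ℕ) : Module.End ℝ ℝ[X] :=
  ∑ j ∈ range N, gaussCoeff α j • derivative ^ (2 * j)

theorem hermiteTransform_apply (N : ℕ) (p : ℝ[X]) :
    hermiteTransform α N p =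
      ∑ j ∈ range N, gaussCoeff α j • derivative^[2 * j] p := by
  simp [hermiteTransform, Module.End.pow_apply]

theorem genHermite_eq_hermiteTransform {n N : ℕ} (hN : n / 2 < N) :
    genHermite α n = hermiteTransform α N (X ^ n) := by
  rw [hermiteTransform_apply, genHermite, ← sum_subset (range_subset_range.2 hN)]
  · refine sum_congr rfl fun j hj => ?_
    have h2j : 2 * j ≤ n := by simp only [mem_range] at hj; omega
    rw [iterate_derivative_X_pow_eq_C_mul, smul_eq_C_mul, ← mul_assoc, ← C_mul]
    congr 2
    rw [gaussCoeff, ← Nat.factorial_mul_descFactorial h2j]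
    push_cast
    field_simp
  · intro j _ hj
    rw [iterate_derivative_eq_zero, smul_zero]
    simp only [mem_range, natDegree_X_pow] at hj ⊢
    omega

theorem commute_derivative_hermiteTransform (N : ℕ) :
    Commute derivative (hermiteTransform α N) :=
  Commute.sum_right _ _ _ fun _ _ => ((Commute.refl _).pow_right _).smul_right _

theorem derivative_genHermite (n : ℕ) :
    derivative (genHermite α n) = (n : ℝ) • genHermite α (n - 1) := by
  rw [genHermite_eq_hermiteTransform α (N := n / 2 + 1) (by omega),
    genHermite_eq_hermiteTransform α (N := n / 2 + 1) (by omega), ← Module.End.mul_apply,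
    (commute_derivative_hermiteTransform α _).eq, Module.End.mul_apply, derivative_X_pow,
    ← smul_eq_C_mul, map_smul]

noncomputable def hermiteRaise : Module.End ℝ ℝ[X] :=
  LinearMap.mulLeft ℝ X - α • derivative

theorem hermiteRaise_apply (p : ℝ[X]) : hermiteRaise α p = X * p - α • derivative p := rfl

theorem hermiteTransform_X_mul {N : ℕ} {p : ℝ[X]} (hp : derivative^[2 * N + 1] p = 0) :
    hermiteTransform α (N + 1) (X * p) = hermiteRaise α (hermiteTransform α (N + 1) p) := by
  have hterm : ∀ j : ℕ, gaussCoeff α (j + 1) • derivative^[2 * (j + 1)] (X * p) =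
      X * (gaussCoeff α (j + 1) • derivative^[2 * (j + 1)] p) +
        (-α) • gaussCoeff α j • derivative^[2 * j + 1] p := by
    intro j
    rw [show 2 * (j + 1) = 2 * j + 1 + 1 by ring, iterate_derivative_succ_X_mul, smul_add,
      mul_smul_comm, ← Nat.cast_smul_eq_nsmul ℝ, smul_smul, smul_smul, ← gaussCoeff_succ_mul]
    push_cast
    ring_nf
  have hX : hermiteTransform α (N + 1) (X * p) = X * hermiteTransform α (N + 1) p +
      (-α) • ∑ j ∈ range N, gaussCoeff α j • derivative^[2 * j + 1] p := by
    rw [hermiteTransform_apply, hermiteTransform_apply, sum_range_succ', sum_range_succ' _ N,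
      sum_congr rfl fun j _ => hterm j, sum_add_distrib, ← mul_sum, ← smul_sum]
    simp only [gaussCoeff_zero, one_smul, mul_zero, Function.iterate_zero_apply, mul_add]
    abel
  have hD : derivative (hermiteTransform α (N + 1) p) =
      ∑ j ∈ range N, gaussCoeff α j • derivative^[2 * j + 1] p := by
    simp only [hermiteTransform_apply, map_add, map_sum, map_smul, sum_range_succ _ N,
      ← Function.iterate_succ_apply' derivative, hp, smul_zero, add_zero]
  rw [hermiteRaise_apply, hX, hD, neg_smul, sub_eq_add_neg]

theorem genHermite_zero : genHermite α 0 = 1 := by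
  simp [genHermite]

theorem genHermite_succ (n : ℕ) : genHermite α (n + 1) = hermiteRaise α (genHermite α n) := by
  rw [genHermite_eq_hermiteTransform α (N := n + 1) (by omega),
    genHermite_eq_hermiteTransform α (N := n + 1) (by omega), pow_succ', hermiteTransform_X_mul]
  exact iterate_derivative_eq_zero (by rw [natDegree_X_pow]; omega)

theorem hermiteRaise_pow_genHermite (k n : ℕ) :
    (hermiteRaise α ^ k) (genHermite α n) = genHermite α (n + k) := by
  induction k with
  | zero => rfl
  | succ k ih => rw [pow_succ', Module.End.mul_apply, ih, ← genHermite_succ, add_assoc]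

theorem iterate_derivative_genHermite (k n : ℕ) :
    derivative^[k] (genHermite α n) = (n.descFactorial k : ℝ) • genHermite α (n - k) := by
  induction k with
  | zero => simp
  | succ k ih =>
    rw [Function.iterate_succ_apply', ih, map_smul, derivative_genHermite, smul_smul,
      Nat.descFactorial_succ, Nat.sub_sub]
    push_cast
    ring_nf

theorem hermiteRaise_comp_mul' :
    hermiteRaise α ∘ₗ LinearMap.mul' ℝ ℝ[X] = LinearMap.mul' ℝ ℝ[X] ∘ₗ
      ((hermiteRaise α).rTensor ℝ[X] + (-α) • derivative.lTensor ℝ[X]) := by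
  refine TensorProduct.ext' fun f g => ?_
  simp only [LinearMap.comp_apply, LinearMap.mul'_apply, LinearMap.add_apply, LinearMap.smul_apply,
    LinearMap.rTensor_tmul, LinearMap.lTensor_tmul, map_add, map_smul, hermiteRaise_apply,
    derivative_mul]
  rw [sub_mul, smul_mul_assoc, mul_assoc, neg_smul, smul_add]
  abel

theorem hermiteRaise_pow_mul (p : ℕ) (f g : ℝ[X]) :
    (hermiteRaise α ^ p) (f * g) = ∑ i ∈ range (p + 1),
      ((p.choose i : ℝ) * (-α) ^ i) • ((hermiteRaise α ^ (p - i)) f * derivative^[i] g) := by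
  have hcomm : Commute ((-α) • derivative.lTensor ℝ[X]) ((hermiteRaise α).rTensor ℝ[X]) := by
    rw [commute_iff_eq, Module.End.mul_eq_comp, Module.End.mul_eq_comp, LinearMap.smul_comp,
      LinearMap.comp_smul, LinearMap.lTensor_comp_rTensor, LinearMap.rTensor_comp_lTensor]
  have := LinearMap.congr_fun
    (Module.End.commute_pow_left_of_commute (hermiteRaise_comp_mul' α) p) (f ⊗ₜ g)
  rw [add_comm, hcomm.add_pow] at this
  simp only [_root_.smul_pow, LinearMap.lTensor_pow, LinearMap.rTensor_pow, LinearMap.sum_apply,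
    map_sum, Module.End.mul_apply, Module.End.natCast_apply, LinearMap.smul_apply, map_nsmul,
    map_smul, LinearMap.rTensor_tmul, LinearMap.lTensor_tmul, LinearMap.comp_apply,
    LinearMap.mul'_apply, Module.End.pow_apply] at this
  simp only [Module.End.pow_apply]
  rw [this]
  refine sum_congr rfl fun i _ => ?_
  rw [mul_comm, mul_smul, Nat.cast_smul_eq_nsmul]

theorem genHermite_add (p q : ℕ) :
    genHermite α (p + q) = ∑ i ∈ range (p + 1),
      ((p.choose i : ℝ) * (-α) ^ i * q.descFactorial i) •
        (genHermite α (p - i) * genHermite α (q - i)) := by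
  rw [add_comm, ← hermiteRaise_pow_genHermite, ← one_mul (genHermite α q), hermiteRaise_pow_mul]
  refine sum_congr rfl fun i _ => ?_
  rw [← genHermite_zero α, hermiteRaise_pow_genHermite, iterate_derivative_genHermite, zero_add,
    mul_smul_comm, smul_smul]

theorem choose_smul_genHermite {m n : ℕ} (hmn : m ≤ n) :
    (n.choose m : ℝ) • genHermite α n = ∑ i ∈ range (m + 1),
      ((-α) ^ i / (i.factorial * (m - i).factorial) * n.descFactorial (m + i)) •
        (genHermite α (m - i) * genHermite α (n - (m + i))) := by
  obtain ⟨q, rfl⟩ := Nat.exists_eq_add_of_le hmn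
  rw [genHermite_add, smul_sum]
  refine sum_congr rfl fun i hi => ?_
  rw [smul_smul, Nat.add_sub_add_left,
    Nat.descFactorial_add_eq_mul_choose q (Nat.lt_succ_iff.1 (mem_range.1 hi))]
  congr 1
  push_cast
  field_simp

end GenHermite

theorem gstar_eq_fwdDiff_iter (γ : ℕ → ℝ) (m : ℕ) : gstar γ m = (fwdDiff 1)^[m] γ 0 := by
  rw [fwdDiff_iter_eq_sum_shift, gstar]
  refine sum_congr rfl fun k _ => ?_
  simp only [zsmul_eq_mul, zero_add, nsmul_one, Nat.cast_id]
  push_cast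
  ring

theorem sum_choose_mul_gstar (γ : ℕ → ℝ) (n : ℕ) :
    ∑ m ∈ range (n + 1), (n.choose m : ℝ) * gstar γ m = γ n := by
  simpa [gstar_eq_fwdDiff_iter, nsmul_eq_mul] using (shift_eq_sum_fwdDiff_iter 1 γ n 0).symm

theorem Finset.sum_range_sum_range_div_two {M : Type*} [AddCommMonoid M] (n : ℕ)
    (f : ℕ → ℕ → M) (hf : ∀ m i, n < m + i → f m i = 0) :
    ∑ k ∈ range (n + 1), ∑ j ∈ range (k / 2 + 1), f (k - j) j =
      ∑ m ∈ range (n + 1), ∑ i ∈ range (m + 1), f m i := by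
  rw [sum_sigma', sum_sigma']
  refine sum_bij_ne_zero (fun a _ _ => ⟨a.1 - a.2, a.2⟩) ?_ ?_ ?_ ?_
  · intro a ha _
    simp only [mem_sigma, mem_range] at ha ⊢
    omega
  · rintro ⟨k, j⟩ ha _ ⟨k', j'⟩ hb _ hab
    simp only [mem_sigma, mem_range, Sigma.mk.injEq, heq_eq_eq] at ha hb hab ⊢
    omega
  · rintro ⟨m, i⟩ hb hne
    refine ⟨⟨m + i, i⟩, ?_, ?_, ?_⟩
    · simp only [mem_sigma, mem_range] at hb ⊢
      have := mt (hf m i) hne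
      omega
    · simpa using hne
    · simp
  · intro a _ _
    rfl

theorem stmt_10_general (α : ℝ) (γ : ℕ → ℝ) (n : ℕ) :
    ∑ k ∈ Finset.range (n + 1), Qpoly α γ k * (derivative^[k] (genHermite α n)) =
      γ n • genHermite α n := by
  let f : ℕ → ℕ → ℝ[X] := fun m i =>
    (gstar γ m * ((-α) ^ i / (i.factorial * (m - i).factorial) * n.descFactorial (m + i))) •
      (genHermite α (m - i) * genHermite α (n - (m + i)))
  have hQ : ∀ k, Qpoly α γ k * derivative^[k] (genHermite α n) =
      ∑ j ∈ range (k / 2 + 1), f (k - j) j := by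
    intro k
    rw [Qpoly, sum_mul, iterate_derivative_genHermite]
    refine sum_congr rfl fun j hj => ?_
    have hjk : k - j - j = k - 2 * j ∧ k - j + j = k := by
      simp only [mem_range] at hj; omega
    simp only [f, hjk, ← smul_eq_C_mul, smul_mul_smul_comm]
    congr 1
    ring
  have hf : ∀ m i, n < m + i → f m i = 0 := fun m i h => by
    simp [f, Nat.descFactorial_eq_zero_iff_lt.2 h]
  have hinner : ∀ m ∈ range (n + 1), ∑ i ∈ range (m + 1), f m i =
      ((n.choose m : ℝ) * gstar γ m) • genHermite α n := fun m hm => by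
    rw [mul_comm, mul_smul, choose_smul_genHermite α (Nat.lt_succ_iff.1 (mem_range.1 hm)),
      smul_sum]
    exact sum_congr rfl fun i _ => mul_smul _ _ _
  calc _ = ∑ k ∈ range (n + 1), ∑ j ∈ range (k / 2 + 1), f (k - j) j :=
        sum_congr rfl fun k _ => hQ k
    _ = ∑ m ∈ range (n + 1), ∑ i ∈ range (m + 1), f m i := sum_range_sum_range_div_two n f hf
    _ = ∑ m ∈ range (n + 1), ((n.choose m : ℝ) * gstar γ m) • genHermite α n :=
        sum_congr rfl hinner
    _ = γ n • genHermite α n := by rw [← sum_smul, sum_choose_mul_gstar]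

theorem stmt_10 (α : ℝ) (hα : 0 < α) (γ : ℕ → ℝ) (n : ℕ) :
    ∑ k ∈ Finset.range (n + 1), Qpoly α γ k * (derivative^[k] (genHermite α n)) =
      γ n • genHermite α n :=
  stmt_10_general α γ n
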